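/- Under Assumption A, for every η > 0 and every 0 < σ < s, the expected distortion of the nonlinear projection associated with the outer leaves Λ_η of the subtree 𝒯_η satisfies ℰ[P_{Λ_η}] ≤ c_σ · η^{4σ/(2σ+1)}, where c_σ > 0 is a constant depending only on a, b, s, C₁, C₂ and σ. -/

import Mathlib

open MeasureTheory Set ProbabilityTheory
open scoped BigOperators ENNReal NNReal

attribute [local instance] Classical.propDecidable

noncomputable section

/-- Euclidean space `ℝ^D`. -/
abbrev Euc (D : ℕ) : Type := EuclideanSpace ℝ (Fin D)

/-- A partition tree on a subset `X` of `ℝ^D`, with branching number at most `a`.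
Cells are abstract nodes; `cset I` is the subset of `ℝ^D` associated with the cell `I`,
`depth I` its depth, `parent I` its parent. -/
structure PartitionTree (D : ℕ) (X : Set (Euc D)) (a : ℕ) : Type 1 where
  Cell : Type
  cellCountable : Countable Cell
  cset : Cell → Set (Euc D)
  depth : Cell → ℕ
  parent : Cell → Cell
  root : Cell
  root_cset : cset root = X
  depth_root : depth root = 0
  parent_root : parent root = root
  eq_root_of_depth_eq_zero : ∀ I, depth I = 0 → I = root
  depth_parent : ∀ I, I ≠ root → depth (parent I) + 1 = depth I
  level_finite : ∀ j : ℕ, {I | depth I = j}.Finite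
  level_cover : ∀ j : ℕ, ⋃ I ∈ {I | depth I = j}, cset I = X
  level_disjoint : ∀ I J, depth I = depth J → I ≠ J → Disjoint (cset I) (cset J)
  cset_measurable : ∀ I, MeasurableSet (cset I)
  cset_eq_iUnion_children : ∀ I, cset I = ⋃ J ∈ {J | parent J = I ∧ J ≠ root}, cset J
  ncard_children_le : ∀ I, {J | parent J = I ∧ J ≠ root}.ncard ≤ a

namespace PartitionTree

variable {D : ℕ} {X : Set (Euc D)} {a : ℕ} (T : PartitionTree D X a)

/-- The children of a cell. -/
def children (I : T.Cell) : Set T.Cell := {J | T.parent J = I ∧ J ≠ T.root}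

/-- `descend k I` is the set `𝒞^k(I)` of `k`-th generation descendants of `I`. -/
def descend : ℕ → T.Cell → Set T.Cell
  | 0, I => {I}
  | k + 1, I => ⋃ J ∈ descend k I, T.children J

/-- A subtree: a family of cells containing the parent of each of its cells. -/
def IsSubtree (S : Set T.Cell) : Prop := ∀ I ∈ S, T.parent I ∈ S

/-- The outer leaves `Λ(𝒯)` of a subtree `𝒯`. -/
def outerLeaves (S : Set T.Cell) : Set T.Cell := {I | I ∉ S ∧ T.parent I ∈ S}

end PartitionTree

/-- The essential diameter of a set `I` with respect to the measure `ρ`: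
`ediam ρ I = inf { diam (I \ J) | J ⊆ I Borel, ρ J = 0 }`. -/
def ediam {D : ℕ} (ρ : Measure (Euc D)) (I : Set (Euc D)) : ℝ :=
  ⨅ J : {J : Set (Euc D) // MeasurableSet J ∧ J ⊆ I ∧ ρ J = 0},
    Metric.diam (I \ (J : Set (Euc D)))

namespace PartitionTree

variable {D : ℕ} {X : Set (Euc D)} {a : ℕ} (T : PartitionTree D X a)
  (ρ : Measure (Euc D)) (xstar : T.Cell → Euc D)

/-- The (population) center of mass `c_I` of a cell: `ρ(I)⁻¹ ∫_I x dρ(x)` if `ρ(I) > 0`,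
and the arbitrary fixed point `xstar I` otherwise. -/
def center (I : T.Cell) : Euc D :=
  if ρ (T.cset I) ≠ 0 then (ρ (T.cset I)).toReal⁻¹ • ∫ x in T.cset I, x ∂ρ else xstar I

/-- The local expected distortion `ℰ_I = ∫_I ‖x - c_I‖² dρ(x)`. -/
def cellErr (I : T.Cell) : ℝ := ∫ x in T.cset I, ‖x - T.center ρ xstar I‖ ^ 2 ∂ρ

/-- `ε_I² = ℰ_I - ∑_{J ∈ 𝒞(I)} ℰ_J`. -/
def epsSq (I : T.Cell) : ℝ :=
  T.cellErr ρ xstar I - ∑ᶠ J ∈ T.children I, T.cellErr ρ xstar J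

/-- `ε_I ≥ 0`, defined by `ε_I² = ℰ_I - ∑_{J ∈ 𝒞(I)} ℰ_J`. -/
def eps (I : T.Cell) : ℝ := Real.sqrt (T.epsSq ρ xstar I)

/-- The subtree `𝒯_η`. -/
def Teta (η : ℝ) : Set T.Cell :=
  if ∀ I, T.eps ρ xstar I < η then {T.root}
  else {I | ∃ k, ∃ J ∈ T.descend k I, η ≤ T.eps ρ xstar J}

/-- The nonlinear projection `P_Λ(x) = ∑_{I ∈ Λ} c_I 1_I(x)` associated with a family of
cells `Λ` and code vectors `c`. -/
def proj (c : T.Cell → Euc D) (Λ : Set T.Cell) (x : Euc D) : Euc D :=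
  ∑ᶠ I ∈ Λ, (T.cset I).indicator (fun _ => c I) x

variable {n : ℕ}

/-- The number `n_I` of sample points lying in the cell `I`. -/
def empCount (x : Fin n → Euc D) (I : T.Cell) : ℕ := {i | x i ∈ T.cset I}.ncard

/-- The empirical center of mass `ĉ_I` of a cell: the average of the sample points lying in
`I` if there are any, and the arbitrary fixed point `xhat I` otherwise. -/
def empCenter (xhat : T.Cell → Euc D) (x : Fin n → Euc D) (I : T.Cell) : Euc D :=
  if T.empCount x I ≠ 0 then
    ((T.empCount x I : ℝ))⁻¹ • ∑ᶠ i ∈ {i : Fin n | x i ∈ T.cset I}, x i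
  else xhat I

/-- The empirical local distortion `Ê_I = n⁻¹ ∑_{i : X_i ∈ I} ‖X_i - ĉ_I‖²`. -/
def empErr (xhat : T.Cell → Euc D) (x : Fin n → Euc D) (I : T.Cell) : ℝ :=
  (n : ℝ)⁻¹ * ∑ᶠ i ∈ {i : Fin n | x i ∈ T.cset I}, ‖x i - T.empCenter xhat x I‖ ^ 2

/-- `ε̂_I² = Ê_I - ∑_{J ∈ 𝒞(I)} Ê_J`. -/
def empEpsSq (xhat : T.Cell → Euc D) (x : Fin n → Euc D) (I : T.Cell) : ℝ :=
  T.empErr xhat x I - ∑ᶠ J ∈ T.children I, T.empErr xhat x J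

/-- `ε̂_I ≥ 0`, defined by `ε̂_I² = Ê_I - ∑_{J ∈ 𝒞(I)} Ê_J`. -/
def empEps (xhat : T.Cell → Euc D) (x : Fin n → Euc D) (I : T.Cell) : ℝ :=
  Real.sqrt (T.empEpsSq xhat x I)

/-- The empirical subtree `T̂_η`, truncated at depth `jn`. -/
def empTeta (xhat : T.Cell → Euc D) (x : Fin n → Euc D) (jn : ℕ) (η : ℝ) : Set T.Cell :=
  if ∀ I, T.depth I ≤ jn → T.empEps xhat x I < η then {T.root}
  else {I | ∃ k, ∃ J ∈ T.descend k I, T.depth J ≤ jn ∧ η ≤ T.empEps xhat x J}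

end PartitionTree

/-- Assumption A: `ediam(I) ≤ C₁ ρ(I)^s` and `ediam(I) ≤ C₂ b^{-j_I}` for every cell `I`. -/
def AssumptionA {D : ℕ} {X : Set (Euc D)} {a : ℕ} (T : PartitionTree D X a)
    (ρ : Measure (Euc D)) (b s C₁ C₂ : ℝ) : Prop :=
  ∀ I : T.Cell,
    ediam ρ (T.cset I) ≤ C₁ * (ρ (T.cset I)).toReal ^ s ∧
    ediam ρ (T.cset I) ≤ C₂ * b ^ (-(T.depth I : ℝ))


/-!
Since the outer leaves `Λ_η` partition `𝒳`, `ℰ[P_{Λ_η}] = ∑_{I ∈ Λ_η} ℰ_I`. Every descendant `J`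
of a leaf lies outside `𝒯_η`, so `ε_J < η`, while Assumption A gives
`ε_J² ≤ ℰ_J ≤ ediam(J)² ρ_J ≤ C₁² ρ_J^(2s+1)`; interpolating between the two bounds yields
`ε_J² ≤ C₁^(2/(2s+1)) η^(4s/(2s+1)) ρ_J`. Telescoping `ℰ_I = ∑ ε_J² + (remainder)` over `N`
generations below `I` therefore costs `N C₁^(2/(2s+1)) η^(4s/(2s+1)) ρ_I`, and the remainder is at
most `C₂² b^(-2N) ρ_I` by the depth bound of Assumption A. Summing over the leaves and taking
`N ≈ log (1/η)` turns the factor `N` into a loss `η^(-(γ_s - γ_σ))`, where `γ_t = 4t/(2t+1)`.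
-/

open scoped RealInnerProductSpace

theorem Continuous.integrableOn_of_isBounded {α F : Type*} [MetricSpace α] [ProperSpace α]
    [MeasurableSpace α] [OpensMeasurableSpace α] {μ : Measure α} [IsFiniteMeasureOnCompacts μ]
    [NormedAddCommGroup F] {f : α → F} (hf : Continuous f) {s : Set α}
    (hs : Bornology.IsBounded s) : IntegrableOn f s μ :=
  (hf.continuousOn.integrableOn_compact hs.isCompact_closure).mono_set subset_closure

section Variance

variable {E : Type*} [NormedAddCommGroup E] [InnerProductSpace ℝ E] [MeasurableSpace E]
  [BorelSpace E] [ProperSpace E] {μ : Measure E} [IsFiniteMeasure μ] {s : Set E}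

theorem setIntegral_norm_sub_setAverage_sq_le (hs : Bornology.IsBounded s) (c : E) :
    ∫ x in s, ‖x - ⨍ y in s, y ∂μ‖ ^ 2 ∂μ ≤ ∫ x in s, ‖x - c‖ ^ 2 ∂μ := by
  set m := ⨍ y in s, y ∂μ
  have hsub : IntegrableOn (fun x => x - m) s μ :=
    (continuous_id.sub continuous_const).integrableOn_of_isBounded hs
  have hsq : IntegrableOn (fun x => ‖x - m‖ ^ 2) s μ :=
    (by fun_prop : Continuous fun x => ‖x - m‖ ^ 2).integrableOn_of_isBounded hs
  have hlin : IntegrableOn (fun x => 2 * ⟪m - c, x - m⟫) s μ :=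
    (by fun_prop : Continuous fun x => 2 * ⟪m - c, x - m⟫).integrableOn_of_isBounded hs
  have hconst : IntegrableOn (fun _ => ‖m - c‖ ^ 2) s μ := integrableOn_const (measure_ne_top μ s)
  have hcross : ∫ x in s, ⟪m - c, x - m⟫ ∂μ = 0 := by
    rw [integral_inner hsub, setAverage_sub_setAverage (measure_ne_top μ s), inner_zero_right]
  calc ∫ x in s, ‖x - m‖ ^ 2 ∂μ
      ≤ ∫ x in s, ‖x - m‖ ^ 2 ∂μ + μ.real s * ‖m - c‖ ^ 2 :=
        le_add_of_nonneg_right (by positivity)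
    _ = ∫ x in s, (‖x - m‖ ^ 2 + (2 * ⟪m - c, x - m⟫ + ‖m - c‖ ^ 2)) ∂μ := by
        rw [integral_add hsq (hlin.add hconst : IntegrableOn (fun x => _ + _) s μ),
          integral_add hlin hconst, integral_const_mul, hcross, setIntegral_const, smul_eq_mul]
        ring
    _ = ∫ x in s, ‖x - c‖ ^ 2 ∂μ := by
        congr 1 with x
        rw [← sub_add_sub_cancel x m c, norm_add_sq_real, real_inner_comm]
        ring

end Variance

theorem setIntegral_norm_sub_setAverage_sq_le_ediam_sq {D : ℕ} {ρ : Measure (Euc D)}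
    [IsFiniteMeasure ρ] {s : Set (Euc D)} (hsm : MeasurableSet s) (hs : Bornology.IsBounded s) :
    ∫ x in s, ‖x - ⨍ y in s, y ∂ρ‖ ^ 2 ∂ρ ≤ ediam ρ s ^ 2 * ρ.real s := by
  set V := ∫ x in s, ‖x - ⨍ y in s, y ∂ρ‖ ^ 2 ∂ρ
  rcases eq_or_ne (ρ s) 0 with h0 | h0
  · simp [V, measureReal_def, h0]
  have hpos : 0 < ρ.real s := ENNReal.toReal_pos h0 (measure_ne_top ρ s)
  have hdiam (J : {J : Set (Euc D) // MeasurableSet J ∧ J ⊆ s ∧ ρ J = 0}) :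
      V ≤ Metric.diam (s \ J.1) ^ 2 * ρ.real s := by
    obtain ⟨J, -, -, hJ⟩ := J
    obtain ⟨x₀, hx₀⟩ : (s \ J).Nonempty :=
      nonempty_of_measure_ne_zero (by rwa [measure_sdiff_null hJ])
    have hnear : ∀ᵐ x ∂ρ.restrict s, ‖x - x₀‖ ^ 2 ≤ Metric.diam (s \ J) ^ 2 := by
      filter_upwards [ae_restrict_mem hsm, ae_restrict_of_ae (measure_eq_zero_iff_ae_notMem.mp hJ)]
        with x hxs hxJ
      rw [← dist_eq_norm]
      gcongr
      exact Metric.dist_le_diam_of_mem (hs.subset sdiff_subset) ⟨hxs, hxJ⟩ hx₀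
    calc V ≤ ∫ x in s, ‖x - x₀‖ ^ 2 ∂ρ := setIntegral_norm_sub_setAverage_sq_le hs x₀
      _ ≤ ∫ _ in s, Metric.diam (s \ J) ^ 2 ∂ρ :=
        integral_mono_ae
          ((by fun_prop : Continuous fun x => ‖x - x₀‖ ^ 2).integrableOn_of_isBounded hs)
          (integrableOn_const (measure_ne_top ρ s)) hnear
      _ = Metric.diam (s \ J) ^ 2 * ρ.real s := by rw [setIntegral_const, smul_eq_mul, mul_comm]
  have : Nonempty {J : Set (Euc D) // MeasurableSet J ∧ J ⊆ s ∧ ρ J = 0} :=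
    ⟨⟨∅, MeasurableSet.empty, empty_subset s, measure_empty⟩⟩
  have hsqrt : Real.sqrt (V / ρ.real s) ≤ ediam ρ s :=
    le_ciInf fun J => (Real.sqrt_le_left Metric.diam_nonneg).mpr ((div_le_iff₀ hpos).mpr (hdiam J))
  calc V = Real.sqrt (V / ρ.real s) ^ 2 * ρ.real s := by
        rw [Real.sq_sqrt (div_nonneg (integral_nonneg fun _ => by positivity) hpos.le),
          div_mul_cancel₀ _ hpos.ne']
    _ ≤ ediam ρ s ^ 2 * ρ.real s := by gcongr

namespace PartitionTree

variable {D : ℕ} {X : Set (Euc D)} {a : ℕ} (T : PartitionTree D X a)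

theorem depth_of_mem_children {I J : T.Cell} (h : J ∈ T.children I) :
    T.depth J = T.depth I + 1 := by
  rw [← T.depth_parent J h.2, h.1]

theorem children_finite (I : T.Cell) : (T.children I).Finite :=
  (T.level_finite (T.depth I + 1)).subset fun _ => T.depth_of_mem_children

theorem cset_subset_of_mem_children {I J : T.Cell} (h : J ∈ T.children I) :
    T.cset J ⊆ T.cset I := by
  rw [T.cset_eq_iUnion_children I]
  exact subset_biUnion_of_mem h

theorem cset_subset_cset_parent {I : T.Cell} (hI : I ≠ T.root) : T.cset I ⊆ T.cset (T.parent I) :=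
  T.cset_subset_of_mem_children ⟨rfl, hI⟩

theorem cset_subset (I : T.Cell) : T.cset I ⊆ X := by
  intro x hx
  rw [← T.level_cover (T.depth I)]
  exact mem_biUnion rfl hx

theorem mem_descend_succ {k : ℕ} {I J : T.Cell} :
    J ∈ T.descend (k + 1) I ↔ ∃ K ∈ T.descend k I, J ∈ T.children K := by
  simp only [descend, mem_iUnion, exists_prop]

theorem depth_of_mem_descend {k : ℕ} {I J : T.Cell} (h : J ∈ T.descend k I) :
    T.depth J = T.depth I + k := by
  induction k generalizing J with
  | zero => rw [show J = I from h]; rfl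
  | succ k ih =>
    obtain ⟨K, hK, hJ⟩ := T.mem_descend_succ.mp h
    rw [T.depth_of_mem_children hJ, ih hK, add_assoc]

theorem descend_finite (k : ℕ) (I : T.Cell) : (T.descend k I).Finite :=
  (T.level_finite (T.depth I + k)).subset fun _ => T.depth_of_mem_descend

theorem cset_subset_of_mem_descend {k : ℕ} {I J : T.Cell} (h : J ∈ T.descend k I) :
    T.cset J ⊆ T.cset I := by
  induction k generalizing J with
  | zero => rw [show J = I from h]
  | succ k ih =>
    obtain ⟨K, hK, hJ⟩ := T.mem_descend_succ.mp h
    exact (T.cset_subset_of_mem_children hJ).trans (ih hK)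

theorem mem_descend_depth_root (I : T.Cell) : I ∈ T.descend (T.depth I) T.root := by
  induction hd : T.depth I generalizing I with
  | zero => rw [T.eq_root_of_depth_eq_zero I hd]; rfl
  | succ k ih =>
    have hI : I ≠ T.root := by rintro rfl; simp [T.depth_root] at hd
    exact T.mem_descend_succ.mpr ⟨T.parent I, ih _ (by have := T.depth_parent I hI; omega), rfl, hI⟩

theorem mem_descend_succ_parent {k : ℕ} {I J : T.Cell} (hI : I ≠ T.root)
    (h : J ∈ T.descend k I) : J ∈ T.descend (k + 1) (T.parent I) := by
  induction k generalizing J with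
  | zero => rw [show J = I from h]; exact T.mem_descend_succ.mpr ⟨T.parent I, rfl, rfl, hI⟩
  | succ k ih =>
    obtain ⟨K, hK, hJ⟩ := T.mem_descend_succ.mp h
    exact T.mem_descend_succ.mpr ⟨K, ih hK, hJ⟩

theorem parent_iterate_eq_of_mem_cset {x : Euc D} {m : ℕ} {I J : T.Cell}
    (hxI : x ∈ T.cset I) (hxJ : x ∈ T.cset J) (hd : T.depth J = T.depth I + m) :
    T.parent^[m] J = I := by
  induction m generalizing J with
  | zero =>
    by_contra hne
    exact Set.disjoint_left.mp (T.level_disjoint J I hd hne) hxJ hxI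
  | succ m ih =>
    have hJ : J ≠ T.root := by rintro rfl; simp [T.depth_root] at hd
    rw [Function.iterate_succ_apply]
    exact ih (T.cset_subset_cset_parent hJ hxJ) (by have := T.depth_parent J hJ; omega)

theorem IsSubtree.parent_iterate_mem {S : Set T.Cell} (hS : T.IsSubtree S) {I : T.Cell}
    (hI : I ∈ S) (k : ℕ) : T.parent^[k] I ∈ S := by
  induction k with
  | zero => exact hI
  | succ k ih => rw [Function.iterate_succ_apply']; exact hS _ ih

theorem pairwiseDisjoint_outerLeaves {S : Set T.Cell} (hS : T.IsSubtree S) :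
    (T.outerLeaves S).PairwiseDisjoint T.cset := by
  intro I hI J hJ hne
  wlog hle : T.depth I ≤ T.depth J generalizing I J
  · exact (this hJ hI hne.symm (by omega)).symm
  rw [Function.onFun, Set.disjoint_left]
  intro x hxI hxJ
  obtain ⟨m, hm⟩ := Nat.exists_eq_add_of_le hle
  have hJI := T.parent_iterate_eq_of_mem_cset hxI hxJ hm
  cases m with
  | zero => exact hne hJI.symm
  | succ m =>
    rw [Function.iterate_succ_apply] at hJI
    exact hI.1 (hJI ▸ hS.parent_iterate_mem T hJ.2 m)

theorem outerLeaves_finite {S : Set T.Cell} (hS : S.Finite) : (T.outerLeaves S).Finite :=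
  (hS.biUnion fun I _ => T.children_finite I).subset fun J ⟨hJ, hpJ⟩ =>
    mem_biUnion hpJ ⟨rfl, by rintro rfl; exact hJ (T.parent_root ▸ hpJ)⟩

theorem exists_mem_outerLeaves_of_mem {S : Set T.Cell} (hS : S.Finite) (hroot : T.root ∈ S)
    {x : Euc D} (hx : x ∈ X) : ∃ I ∈ T.outerLeaves S, x ∈ T.cset I := by
  obtain ⟨d, hd⟩ := (hS.image T.depth).bddAbove
  have key : ∀ k : ℕ, (∃ I ∈ S, T.depth I = k ∧ x ∈ T.cset I) ∨
      ∃ I ∈ T.outerLeaves S, x ∈ T.cset I := by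
    intro k
    induction k with
    | zero => exact .inl ⟨T.root, hroot, T.depth_root, by rwa [T.root_cset]⟩
    | succ k ih =>
      refine ih.elim (fun ⟨I, hIS, hId, hxI⟩ => ?_) .inr
      rw [T.cset_eq_iUnion_children I] at hxI
      obtain ⟨J, hJ, hxJ⟩ := mem_iUnion₂.mp hxI
      by_cases hJS : J ∈ S
      · exact .inl ⟨J, hJS, by rw [T.depth_of_mem_children hJ, hId], hxJ⟩
      · exact .inr ⟨J, ⟨hJS, by rw [hJ.1]; exact hIS⟩, hxJ⟩
  refine (key (d + 1)).resolve_left fun ⟨I, hIS, hId, _⟩ => ?_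
  have := hd (mem_image_of_mem T.depth hIS)
  omega

end PartitionTree

theorem ediam_nonneg {D : ℕ} (ρ : Measure (Euc D)) (s : Set (Euc D)) : 0 ≤ ediam ρ s :=
  Real.iInf_nonneg fun _ => Metric.diam_nonneg

theorem ediam_le_diam {D : ℕ} (ρ : Measure (Euc D)) (s : Set (Euc D)) :
    ediam ρ s ≤ Metric.diam s :=
  (ciInf_le ⟨0, by rintro _ ⟨J, rfl⟩; exact Metric.diam_nonneg⟩
    ⟨∅, MeasurableSet.empty, empty_subset s, measure_empty⟩).trans_eq (by rw [sdiff_empty])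

namespace PartitionTree

variable {D : ℕ} {X : Set (Euc D)} {a : ℕ} (T : PartitionTree D X a)
  {ρ : Measure (Euc D)} {xstar : T.Cell → Euc D}

theorem cellErr_eq_setIntegral_setAverage (I : T.Cell) :
    T.cellErr ρ xstar I = ∫ x in T.cset I, ‖x - ⨍ y in T.cset I, y ∂ρ‖ ^ 2 ∂ρ := by
  rcases eq_or_ne (ρ (T.cset I)) 0 with h | h
  · simp [cellErr, Measure.restrict_eq_zero.mpr h]
  · rw [cellErr, center, if_pos h, setAverage_eq, measureReal_def]

theorem cellErr_le_ediam_sq [IsFiniteMeasure ρ] (hX : Bornology.IsBounded X) (I : T.Cell) :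
    T.cellErr ρ xstar I ≤ ediam ρ (T.cset I) ^ 2 * ρ.real (T.cset I) := by
  rw [cellErr_eq_setIntegral_setAverage]
  exact setIntegral_norm_sub_setAverage_sq_le_ediam_sq (T.cset_measurable I)
    (hX.subset (T.cset_subset I))

theorem epsSq_eq (I : T.Cell) :
    T.epsSq ρ xstar I =
      T.cellErr ρ xstar I - ∑ J ∈ (T.children_finite I).toFinset, T.cellErr ρ xstar J := by
  rw [epsSq, finsum_mem_eq_finite_toFinset_sum _ (T.children_finite I)]

theorem epsSq_le_cellErr (I : T.Cell) : T.epsSq ρ xstar I ≤ T.cellErr ρ xstar I := by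
  rw [epsSq_eq]
  exact sub_le_self _ (Finset.sum_nonneg fun _ _ => integral_nonneg fun _ => by positivity)

theorem sum_descend_succ (g : T.Cell → ℝ) (k : ℕ) (I : T.Cell) :
    ∑ J ∈ (T.descend_finite (k + 1) I).toFinset, g J =
      ∑ K ∈ (T.descend_finite k I).toFinset, ∑ J ∈ (T.children_finite K).toFinset, g J := by
  rw [← Finset.sum_biUnion]
  · congr 1
    ext J
    simp [T.mem_descend_succ]
  · intro K _ K' _ hne
    refine Finset.disjoint_left.mpr fun J hJ hJ' => hne ?_
    rw [Set.Finite.mem_toFinset] at hJ hJ'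
    exact hJ.1.symm.trans hJ'.1

theorem cellErr_eq_sum_epsSq_add (I : T.Cell) (N : ℕ) :
    T.cellErr ρ xstar I =
      ∑ k ∈ Finset.range N, ∑ J ∈ (T.descend_finite k I).toFinset, T.epsSq ρ xstar J +
        ∑ J ∈ (T.descend_finite N I).toFinset, T.cellErr ρ xstar J := by
  induction N with
  | zero =>
    have : (T.descend_finite 0 I).toFinset = {I} := by ext; simp [descend]
    rw [this, Finset.sum_singleton, Finset.sum_range_zero, zero_add]
  | succ N ih =>
    rw [ih, Finset.sum_range_succ, T.sum_descend_succ, add_assoc, ← Finset.sum_add_distrib]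
    congr 2 with J
    rw [epsSq_eq]
    ring

theorem pairwiseDisjoint_descend (k : ℕ) (I : T.Cell) : (T.descend k I).PairwiseDisjoint T.cset :=
  fun _ hJ _ hJ' hne => T.level_disjoint _ _
    ((T.depth_of_mem_descend hJ).trans (T.depth_of_mem_descend hJ').symm) hne

theorem sum_le_mul_measureReal_of_mem_descend [IsFiniteMeasure ρ] {f : T.Cell → ℝ} {M : ℝ}
    (hM : 0 ≤ M) {k : ℕ} {I : T.Cell}
    (hf : ∀ J ∈ T.descend k I, f J ≤ M * ρ.real (T.cset J)) :
    ∑ J ∈ (T.descend_finite k I).toFinset, f J ≤ M * ρ.real (T.cset I) := by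
  have hmass : ∑ J ∈ (T.descend_finite k I).toFinset, ρ.real (T.cset J) ≤ ρ.real (T.cset I) := by
    rw [← measureReal_biUnion_finset (by simpa using T.pairwiseDisjoint_descend k I)
      fun J _ => T.cset_measurable J]
    exact measureReal_mono (iUnion₂_subset fun J hJ =>
      T.cset_subset_of_mem_descend ((Set.Finite.mem_toFinset _).mp hJ))
  calc ∑ J ∈ (T.descend_finite k I).toFinset, f J
      ≤ ∑ J ∈ (T.descend_finite k I).toFinset, M * ρ.real (T.cset J) :=
        Finset.sum_le_sum fun J hJ => hf J ((Set.Finite.mem_toFinset _).mp hJ)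
    _ ≤ M * ρ.real (T.cset I) := by rw [← Finset.mul_sum]; gcongr

theorem proj_eq_of_mem {Λ : Set T.Cell} (hfin : Λ.Finite) (hΛ : Λ.PairwiseDisjoint T.cset)
    (c : T.Cell → Euc D) {I : T.Cell} (hI : I ∈ Λ) {x : Euc D} (hx : x ∈ T.cset I) :
    T.proj c Λ x = c I := by
  rw [proj, finsum_mem_eq_finite_toFinset_sum _ hfin,
    Finset.sum_eq_single_of_mem I (hfin.mem_toFinset.mpr hI)]
  · exact indicator_of_mem hx _
  · intro J hJ hne
    exact indicator_of_notMem
      (fun hxJ => Set.disjoint_left.mp (hΛ (hfin.mem_toFinset.mp hJ) hI hne) hxJ hx) _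

theorem integral_norm_sub_proj_sq [IsFiniteMeasure ρ] (hX : Bornology.IsBounded X)
    {Λ : Set T.Cell} (hfin : Λ.Finite) (hΛ : Λ.PairwiseDisjoint T.cset)
    (hcov : ∀ᵐ x ∂ρ, x ∈ ⋃ I ∈ hfin.toFinset, T.cset I) (c : T.Cell → Euc D) :
    ∫ x, ‖x - T.proj c Λ x‖ ^ 2 ∂ρ = ∑ I ∈ hfin.toFinset, ∫ x in T.cset I, ‖x - c I‖ ^ 2 ∂ρ := by
  have hproj {I : T.Cell} (hI : I ∈ hfin.toFinset) :
      EqOn (fun x => ‖x - T.proj c Λ x‖ ^ 2) (fun x => ‖x - c I‖ ^ 2) (T.cset I) :=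
    fun x hx => by simp only [T.proj_eq_of_mem hfin hΛ c (hfin.mem_toFinset.mp hI) hx]
  calc ∫ x, ‖x - T.proj c Λ x‖ ^ 2 ∂ρ
      = ∫ x in ⋃ I ∈ hfin.toFinset, T.cset I, ‖x - T.proj c Λ x‖ ^ 2 ∂ρ := by
        rw [Measure.restrict_eq_self_of_ae_mem hcov]
    _ = ∑ I ∈ hfin.toFinset, ∫ x in T.cset I, ‖x - T.proj c Λ x‖ ^ 2 ∂ρ := by
        refine integral_biUnion_finset _ (fun I _ => T.cset_measurable I)
          (by rw [Set.Finite.coe_toFinset]; exact hΛ) fun I hI =>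
            IntegrableOn.congr_fun ?_ (hproj hI).symm (T.cset_measurable I)
        exact (by fun_prop : Continuous fun x => ‖x - c I‖ ^ 2).integrableOn_of_isBounded
          (hX.subset (T.cset_subset I))
    _ = ∑ I ∈ hfin.toFinset, ∫ x in T.cset I, ‖x - c I‖ ^ 2 ∂ρ :=
        Finset.sum_congr rfl fun I hI => setIntegral_congr_fun (T.cset_measurable I) (hproj hI)

theorem integral_proj_outerLeaves_le [IsProbabilityMeasure ρ] (hXc : ρ Xᶜ = 0)
    (hX : Bornology.IsBounded X) {S : Set T.Cell} (hS : T.IsSubtree S) (hSfin : S.Finite)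
    (hroot : T.root ∈ S) {M : ℝ} (hM : 0 ≤ M)
    (h : ∀ I ∈ T.outerLeaves S, T.cellErr ρ xstar I ≤ M * ρ.real (T.cset I)) :
    ∫ x, ‖x - T.proj (T.center ρ xstar) (T.outerLeaves S) x‖ ^ 2 ∂ρ ≤ M := by
  have hfin := T.outerLeaves_finite hSfin
  have hΛ := T.pairwiseDisjoint_outerLeaves hS
  have hcov : ∀ᵐ x ∂ρ, x ∈ ⋃ I ∈ hfin.toFinset, T.cset I := by
    filter_upwards [(ae_iff.mpr hXc : ∀ᵐ x ∂ρ, x ∈ X)] with x hx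
    obtain ⟨I, hI, hxI⟩ := T.exists_mem_outerLeaves_of_mem hSfin hroot hx
    exact mem_biUnion (hfin.mem_toFinset.mpr hI) hxI
  calc ∫ x, ‖x - T.proj (T.center ρ xstar) (T.outerLeaves S) x‖ ^ 2 ∂ρ
      = ∑ I ∈ hfin.toFinset, T.cellErr ρ xstar I := T.integral_norm_sub_proj_sq hX hfin hΛ hcov _
    _ ≤ ∑ I ∈ hfin.toFinset, M * ρ.real (T.cset I) :=
        Finset.sum_le_sum fun I hI => h I (hfin.mem_toFinset.mp hI)
    _ ≤ M * ρ.real univ := by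
        rw [← Finset.mul_sum]
        gcongr
        exact sum_measureReal_le_measureReal_univ (fun I _ => T.cset_measurable I)
          (by simpa using hΛ)
    _ = M := by rw [probReal_univ, mul_one]

variable (ρ xstar) {η : ℝ}

theorem eps_lt_of_notMem_Teta {I J : T.Cell} {k : ℕ} (hI : I ∉ T.Teta ρ xstar η)
    (hJ : J ∈ T.descend k I) : T.eps ρ xstar J < η := by
  unfold Teta at hI
  split_ifs at hI with hall
  · exact hall J
  · by_contra! h
    exact hI ⟨k, J, hJ, h⟩

theorem root_mem_Teta : T.root ∈ T.Teta ρ xstar η := by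
  unfold Teta
  split_ifs with hall
  · rfl
  · obtain ⟨I, hI⟩ := not_forall.mp hall
    exact ⟨_, I, T.mem_descend_depth_root I, not_lt.mp hI⟩

theorem isSubtree_Teta : T.IsSubtree (T.Teta ρ xstar η) := by
  unfold Teta
  split_ifs
  · rintro I rfl
    exact T.parent_root
  · rintro I ⟨k, J, hJ, hη⟩
    by_cases hI : I = T.root
    · subst hI
      rw [T.parent_root]
      exact ⟨k, J, hJ, hη⟩
    · exact ⟨k + 1, J, T.mem_descend_succ_parent hI hJ, hη⟩

theorem Teta_finite {j₀ : ℕ} (h : ∀ I, η ≤ T.eps ρ xstar I → T.depth I ≤ j₀) :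
    (T.Teta ρ xstar η).Finite := by
  unfold Teta
  split_ifs
  · exact finite_singleton _
  · refine ((finite_Iic j₀).preimage' fun j _ => T.level_finite j).subset ?_
    rintro I ⟨k, J, hJ, hη⟩
    have := T.depth_of_mem_descend hJ
    have := h J hη
    simp only [mem_preimage, mem_Iic]
    omega

end PartitionTree

theorem min_le_rpow_mul_rpow {x y θ : ℝ} (hx : 0 < x) (hy : 0 < y) (hθ0 : 0 ≤ θ) (hθ1 : θ ≤ 1) :
    min x y ≤ x ^ θ * y ^ (1 - θ) := by
  have hm : 0 < min x y := lt_min hx hy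
  calc min x y = min x y ^ θ * min x y ^ (1 - θ) := by
        rw [← Real.rpow_add hm, add_sub_cancel, Real.rpow_one]
    _ ≤ x ^ θ * y ^ (1 - θ) :=
        mul_le_mul (Real.rpow_le_rpow hm.le (min_le_left x y) hθ0)
          (Real.rpow_le_rpow hm.le (min_le_right x y) (sub_nonneg.mpr hθ1)) (by positivity)
          (by positivity)

/-- Interpolation `min u v ≤ u^θ v^(1-θ)` with `θ = 2s/(2s+1)`, the weight that makes the power
of `x` exactly one. -/
theorem min_sq_le_mul_rpow {C s η x : ℝ} (hC : 0 < C) (hs : 0 < s) (hη : 0 < η) (hx : 0 ≤ x) :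
    min (η ^ 2) ((C * x ^ s) ^ 2 * x) ≤
      C ^ (2 / (2 * s + 1)) * η ^ (4 * s / (2 * s + 1)) * x := by
  rcases hx.eq_or_lt with rfl | hx
  · simp
  have h2s : 0 < 2 * s + 1 := by linarith
  have hθ1 : 2 * s / (2 * s + 1) ≤ 1 := (div_le_one h2s).mpr (by linarith)
  have hsub : 1 - 2 * s / (2 * s + 1) = (2 * s + 1)⁻¹ := by field_simp; ring
  calc min (η ^ 2) ((C * x ^ s) ^ 2 * x)
      ≤ (η ^ 2) ^ (2 * s / (2 * s + 1)) * ((C * x ^ s) ^ 2 * x) ^ (1 - 2 * s / (2 * s + 1)) :=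
        min_le_rpow_mul_rpow (by positivity) (by positivity) (by positivity) hθ1
    _ = C ^ (2 / (2 * s + 1)) * η ^ (4 * s / (2 * s + 1)) * x := by
        have hCx : (C * x ^ s) ^ 2 * x = (C ^ (2 : ℝ)) * x ^ (2 * s + 1) := by
          rw [Real.rpow_two, Real.rpow_add hx, Real.rpow_one, mul_comm 2 s, Real.rpow_mul hx.le,
            Real.rpow_two]
          ring
        rw [hsub, hCx, Real.mul_rpow (by positivity) (by positivity), ← Real.rpow_mul hC.le,
          ← Real.rpow_mul hx.le, mul_inv_cancel₀ h2s.ne', Real.rpow_one, ← Real.rpow_natCast η 2,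
          ← Real.rpow_mul hη.le]
        ring_nf

/-- Take `N = ⌈q log η / log r⌉`, so that `r^N ≤ η^q`, and absorb `N ≲ log (1/η)` into
`η^(q - γ)`. -/
theorem exists_le_mul_rpow_of_forall_le {A B r q γ : ℝ} (hA : 0 ≤ A) (hB : 0 ≤ B) (hr0 : 0 < r)
    (hr1 : r < 1) (hq : 0 < q) (hqγ : q < γ) :
    ∃ c, 0 < c ∧ ∀ η, 0 < η → ∀ E : ℝ, E ≤ 1 →
      (∀ N : ℕ, E ≤ N * (A * η ^ γ) + B * r ^ N) → E ≤ c * η ^ q := by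
  set δ := γ - q
  have hδ : 0 < δ := sub_pos.mpr hqγ
  have hlogr : 0 < -Real.log r := neg_pos.mpr (Real.log_neg hr0 hr1)
  set K := A * (q / (δ * -Real.log r) + 1) + B
  refine ⟨max 1 K, one_pos.trans_le (le_max_left _ _), fun η hη E hE1 hE => ?_⟩
  rcases le_or_gt 1 η with hη1 | hη1
  · calc E ≤ 1 * 1 := by rw [mul_one]; exact hE1
      _ ≤ max 1 K * η ^ q :=
        mul_le_mul (le_max_left _ _) (Real.one_le_rpow hη1 hq.le) zero_le_one
          (zero_le_one.trans (le_max_left _ _))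
  have hlogr' : Real.log r ≠ 0 := (neg_pos.mp hlogr).ne
  set x := q * Real.log η / Real.log r with hxdef
  have hx : 0 ≤ x := div_nonneg_of_nonpos (mul_nonpos_of_nonneg_of_nonpos hq.le
    (Real.log_nonpos hη.le hη1.le)) (Real.log_nonpos hr0.le hr1.le)
  set N := ⌈x⌉₊
  have hrN : r ^ N ≤ η ^ q := by
    calc r ^ N = r ^ (N : ℝ) := (Real.rpow_natCast r N).symm
      _ ≤ r ^ x := Real.rpow_le_rpow_of_exponent_ge hr0 hr1.le (Nat.le_ceil x)
      _ = η ^ q := by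
        rw [Real.rpow_def_of_pos hr0, Real.rpow_def_of_pos hη, hxdef]
        field_simp
  have hηδ : 1 ≤ η ^ (-δ) := Real.one_le_rpow_of_pos_of_le_one_of_nonpos hη hη1.le (by linarith)
  have hN : (N : ℝ) ≤ (q / (δ * -Real.log r) + 1) * η ^ (-δ) := by
    have hlog : -Real.log η ≤ η ^ (-δ) / δ := by
      simpa [Real.log_inv, Real.inv_rpow hη.le, Real.rpow_neg hη.le] using
        Real.log_le_rpow_div (inv_nonneg.mpr hη.le) hδ
    have hxle : x ≤ q / (δ * -Real.log r) * η ^ (-δ) := by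
      rw [hxdef, ← neg_div_neg_eq, ← mul_neg, div_le_iff₀ hlogr]
      calc q * -Real.log η ≤ q * (η ^ (-δ) / δ) := by gcongr
        _ = _ := by field_simp
    linarith [Nat.ceil_lt_add_one hx]
  calc E ≤ N * (A * η ^ γ) + B * r ^ N := hE N
    _ ≤ (q / (δ * -Real.log r) + 1) * η ^ (-δ) * (A * η ^ γ) + B * η ^ q := by gcongr
    _ = (q / (δ * -Real.log r) + 1) * A * (η ^ (-δ) * η ^ γ) + B * η ^ q := by ring
    _ = K * η ^ q := by
        rw [← Real.rpow_add hη, show -δ + γ = q by ring]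
        ring
    _ ≤ max 1 K * η ^ q := by gcongr; exact le_max_right _ _

namespace AssumptionA

open PartitionTree

variable {D : ℕ} {X : Set (Euc D)} {a : ℕ} {T : PartitionTree D X a}
  {ρ : Measure (Euc D)} {xstar : T.Cell → Euc D} {b s C₁ C₂ η : ℝ}

theorem cellErr_le_depth [IsFiniteMeasure ρ] (hA : AssumptionA T ρ b s C₁ C₂)
    (hX : Bornology.IsBounded X) (hb : 0 < b) (I : T.Cell) :
    T.cellErr ρ xstar I ≤ C₂ ^ 2 * (b ^ 2)⁻¹ ^ T.depth I * ρ.real (T.cset I) :=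
  calc T.cellErr ρ xstar I ≤ ediam ρ (T.cset I) ^ 2 * ρ.real (T.cset I) :=
        T.cellErr_le_ediam_sq hX I
    _ ≤ (C₂ * b ^ (-(T.depth I : ℝ))) ^ 2 * ρ.real (T.cset I) := by
        gcongr
        exacts [ediam_nonneg ρ _, (hA I).2]
    _ = C₂ ^ 2 * (b ^ 2)⁻¹ ^ T.depth I * ρ.real (T.cset I) := by
        rw [Real.rpow_neg hb.le, Real.rpow_natCast]
        ring

theorem cellErr_le_measureReal [IsFiniteMeasure ρ] (hA : AssumptionA T ρ b s C₁ C₂)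
    (hX : Bornology.IsBounded X) (I : T.Cell) :
    T.cellErr ρ xstar I ≤ (C₁ * ρ.real (T.cset I) ^ s) ^ 2 * ρ.real (T.cset I) :=
  (T.cellErr_le_ediam_sq hX I).trans <| by
    gcongr
    exacts [ediam_nonneg ρ _, (hA I).1]

theorem epsSq_le_of_eps_lt [IsFiniteMeasure ρ] (hA : AssumptionA T ρ b s C₁ C₂)
    (hX : Bornology.IsBounded X) (hC₁ : 0 < C₁) (hs : 0 < s) (hη : 0 < η) {I : T.Cell}
    (h : T.eps ρ xstar I < η) :
    T.epsSq ρ xstar I ≤ C₁ ^ (2 / (2 * s + 1)) * η ^ (4 * s / (2 * s + 1)) * ρ.real (T.cset I) :=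
  (le_min ((Real.sqrt_lt' hη).mp h).le
    ((T.epsSq_le_cellErr I).trans (hA.cellErr_le_measureReal hX I))).trans
    (min_sq_le_mul_rpow hC₁ hs hη measureReal_nonneg)

theorem exists_depth_le_of_le_eps [IsProbabilityMeasure ρ] (hA : AssumptionA T ρ b s C₁ C₂)
    (hX : Bornology.IsBounded X) (hb : 1 < b) (hη : 0 < η) :
    ∃ j₀, ∀ I, η ≤ T.eps ρ xstar I → T.depth I ≤ j₀ := by
  have hr : (b ^ 2)⁻¹ < 1 := inv_lt_one_of_one_lt₀ (one_lt_pow₀ hb two_ne_zero)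
  obtain ⟨j₀, hj₀⟩ := exists_pow_lt_of_lt_one (by positivity : 0 < η ^ 2 / (C₂ ^ 2 + 1)) hr
  refine ⟨j₀, fun I hI => ?_⟩
  by_contra! hlt
  have hdecay : (b ^ 2)⁻¹ ^ T.depth I ≤ (b ^ 2)⁻¹ ^ j₀ :=
    pow_le_pow_of_le_one (by positivity) hr.le hlt.le
  have hsmall : (C₂ ^ 2 + 1) * (b ^ 2)⁻¹ ^ j₀ < η ^ 2 := by
    rw [lt_div_iff₀ (by positivity)] at hj₀
    linarith
  have hε : η ^ 2 ≤ T.epsSq ρ xstar I := (Real.le_sqrt' hη).mp hI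
  have hℰ : T.epsSq ρ xstar I ≤ C₂ ^ 2 * (b ^ 2)⁻¹ ^ T.depth I * ρ.real (T.cset I) :=
    (T.epsSq_le_cellErr I).trans (hA.cellErr_le_depth hX (by linarith) I)
  have hρ : ρ.real (T.cset I) ≤ 1 := measureReal_le_one
  refine lt_irrefl (η ^ 2) ?_
  calc η ^ 2 ≤ C₂ ^ 2 * (b ^ 2)⁻¹ ^ T.depth I * ρ.real (T.cset I) := hε.trans hℰ
    _ ≤ C₂ ^ 2 * (b ^ 2)⁻¹ ^ j₀ * 1 := by gcongr
    _ < η ^ 2 := by linarith [pow_nonneg (by positivity : (0 : ℝ) ≤ (b ^ 2)⁻¹) j₀]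

theorem cellErr_le_of_notMem_Teta [IsFiniteMeasure ρ] (hA : AssumptionA T ρ b s C₁ C₂)
    (hX : Bornology.IsBounded X) (hb : 1 < b) (hC₁ : 0 < C₁) (hs : 0 < s) (hη : 0 < η)
    {I : T.Cell} (hI : I ∉ T.Teta ρ xstar η) (N : ℕ) :
    T.cellErr ρ xstar I ≤ (N * (C₁ ^ (2 / (2 * s + 1)) * η ^ (4 * s / (2 * s + 1))) +
      C₂ ^ 2 * (b ^ 2)⁻¹ ^ N) * ρ.real (T.cset I) := by
  rw [T.cellErr_eq_sum_epsSq_add I N, add_mul]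
  gcongr
  · calc ∑ k ∈ Finset.range N, ∑ J ∈ (T.descend_finite k I).toFinset, T.epsSq ρ xstar J
        ≤ ∑ k ∈ Finset.range N,
            C₁ ^ (2 / (2 * s + 1)) * η ^ (4 * s / (2 * s + 1)) * ρ.real (T.cset I) :=
          Finset.sum_le_sum fun k _ => T.sum_le_mul_measureReal_of_mem_descend (by positivity)
            fun J hJ => hA.epsSq_le_of_eps_lt hX hC₁ hs hη (T.eps_lt_of_notMem_Teta ρ xstar hI hJ)
      _ = _ := by rw [Finset.sum_const, Finset.card_range, nsmul_eq_mul]; ring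
  · refine T.sum_le_mul_measureReal_of_mem_descend (by positivity) fun J hJ =>
      (hA.cellErr_le_depth hX (by linarith) J).trans ?_
    rw [T.depth_of_mem_descend hJ]
    gcongr C₂ ^ 2 * ?_ * _
    exact pow_le_pow_of_le_one (by positivity) (inv_le_one_of_one_le₀ (one_le_pow₀ hb.le))
      (Nat.le_add_left N _)

theorem integral_proj_Teta_le [IsProbabilityMeasure ρ] (hA : AssumptionA T ρ b s C₁ C₂)
    (hXc : ρ Xᶜ = 0) (hX : Bornology.IsBounded X) (hb : 1 < b) (hC₁ : 0 < C₁)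
    (hs : 0 < s) (hη : 0 < η) (N : ℕ) :
    ∫ x, ‖x - T.proj (T.center ρ xstar) (T.outerLeaves (T.Teta ρ xstar η)) x‖ ^ 2 ∂ρ ≤
      N * (C₁ ^ (2 / (2 * s + 1)) * η ^ (4 * s / (2 * s + 1))) + C₂ ^ 2 * (b ^ 2)⁻¹ ^ N := by
  obtain ⟨j₀, hj₀⟩ := hA.exists_depth_le_of_le_eps hX hb hη
  exact T.integral_proj_outerLeaves_le hXc hX (T.isSubtree_Teta ρ xstar)
    (T.Teta_finite ρ xstar hj₀) (T.root_mem_Teta ρ xstar) (by positivity)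
    fun I hI => hA.cellErr_le_of_notMem_Teta hX hb hC₁ hs hη hI.1 N

theorem integral_proj_Teta_le_one [IsProbabilityMeasure ρ] (hA : AssumptionA T ρ b s C₁ C₂)
    (hXc : ρ Xᶜ = 0) (hX : Bornology.IsBounded X) (hXd : Metric.diam X ≤ 1) (hb : 1 < b)
    (hη : 0 < η) :
    ∫ x, ‖x - T.proj (T.center ρ xstar) (T.outerLeaves (T.Teta ρ xstar η)) x‖ ^ 2 ∂ρ ≤ 1 := by
  obtain ⟨j₀, hj₀⟩ := hA.exists_depth_le_of_le_eps hX hb hη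
  refine T.integral_proj_outerLeaves_le hXc hX (T.isSubtree_Teta ρ xstar)
    (T.Teta_finite ρ xstar hj₀) (T.root_mem_Teta ρ xstar) zero_le_one fun I _ => ?_
  have hdiam : ediam ρ (T.cset I) ≤ 1 :=
    (ediam_le_diam ρ _).trans ((Metric.diam_mono (T.cset_subset I) hX).trans hXd)
  calc T.cellErr ρ xstar I ≤ ediam ρ (T.cset I) ^ 2 * ρ.real (T.cset I) :=
        T.cellErr_le_ediam_sq hX I
    _ ≤ 1 * ρ.real (T.cset I) := by
        gcongr
        exact pow_le_one₀ (ediam_nonneg ρ _) hdiam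

end AssumptionA

theorem stmt_8_general (a : ℕ) (b s C₁ C₂ : ℝ) (hb : 1 < b) (hs : 0 < s)
    (hC₁ : 0 < C₁) (σ : ℝ) (hσ0 : 0 < σ) (hσs : σ < s) :
    ∃ cσ : ℝ, 0 < cσ ∧
      ∀ (D : ℕ) (X : Set (Euc D)) (T : PartitionTree D X a)
        (ρ : Measure (Euc D)) (xstar : T.Cell → Euc D),
        IsProbabilityMeasure ρ → ρ Xᶜ = 0 → (0 : Euc D) ∈ X →
        Bornology.IsBounded X → Metric.diam X ≤ 1 → (∀ I, xstar I ∈ X) →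
        AssumptionA T ρ b s C₁ C₂ →
        ∀ η : ℝ, 0 < η →
          (∫ x, ‖x - T.proj (T.center ρ xstar)
              (T.outerLeaves (T.Teta ρ xstar η)) x‖ ^ 2 ∂ρ) ≤
            cσ * η ^ ((4 * σ) / (2 * σ + 1)) := by
  have hexp : 4 * σ / (2 * σ + 1) < 4 * s / (2 * s + 1) := by
    rw [div_lt_div_iff₀ (by linarith) (by linarith)]
    linarith
  obtain ⟨c, hc, hbound⟩ := exists_le_mul_rpow_of_forall_le (A := C₁ ^ (2 / (2 * s + 1)))
    (by positivity) (sq_nonneg C₂) (by positivity : 0 < (b ^ 2)⁻¹)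
    (inv_lt_one_of_one_lt₀ (one_lt_pow₀ hb two_ne_zero)) (by positivity) hexp
  exact ⟨c, hc, fun D X T ρ xstar _ hXc _ hX hXd _ hA η hη =>
    hbound η hη _ (hA.integral_proj_Teta_le_one hXc hX hXd hb hη) fun N =>
      hA.integral_proj_Teta_le hXc hX hb hC₁ hs hη N⟩

theorem stmt_8 (a : ℕ) (b s C₁ C₂ : ℝ) (ha : 1 ≤ a) (hb : 1 < b) (hs : 0 < s)
    (hC₁ : 0 < C₁) (hC₂ : 0 < C₂) (σ : ℝ) (hσ0 : 0 < σ) (hσs : σ < s) :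
    ∃ cσ : ℝ, 0 < cσ ∧
      ∀ (D : ℕ) (X : Set (Euc D)) (T : PartitionTree D X a)
        (ρ : Measure (Euc D)) (xstar : T.Cell → Euc D),
        IsProbabilityMeasure ρ → ρ Xᶜ = 0 → (0 : Euc D) ∈ X →
        Bornology.IsBounded X → Metric.diam X ≤ 1 → (∀ I, xstar I ∈ X) →
        AssumptionA T ρ b s C₁ C₂ →
        ∀ η : ℝ, 0 < η →
          (∫ x, ‖x - T.proj (T.center ρ xstar)
              (T.outerLeaves (T.Teta ρ xstar η)) x‖ ^ 2 ∂ρ) ≤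
            cσ * η ^ ((4 * σ) / (2 * σ + 1)) :=
  stmt_8_general a b s C₁ C₂ hb hs hC₁ σ hσ0 hσs
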